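/- arXiv:1812.09206 — 3 statements merged into one kernel-verified Lean document; each statement's English description precedes it below -/
import Mathlib

section
/- Let π = (π₀, ..., π_k) ∈ {0,*}^{k+1} and suppose (0, π₀, π₁, ..., π_k) = (π_k, π_{k−1}, ..., π₀, 0) as vectors in {0,*}^{k+2}. Given a k-uniform hypergraph G = (V, E), let G' be the (k+1)-uniform hypergraph with vertex set V ∪ {u} (u ∉ V) and edge set {e ∪ {u} : e ∈ E}. Then G has a π-partition if and only if G' has a (0, π₀, π₁, ..., π_k)-partition. -/
/-- A π-partition of the k-uniform hypergraph (V, E): (V₁, V₂) partitions V and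
for every k-subset X of V, if π |X ∩ V₁| = some true then X is an edge, and
if π |X ∩ V₁| = some false then X is a non-edge.  (`none` encodes `*`,
`some false` encodes `0`, `some true` encodes `1`.) -/
def IsPiPartition {α : Type} [DecidableEq α] (k : ℕ) (π : ℕ → Option Bool)
    (V : Finset α) (E : Set (Finset α)) (V₁ V₂ : Finset α) : Prop :=
  V₁ ∪ V₂ = V ∧ Disjoint V₁ V₂ ∧
  ∀ X : Finset α, X ⊆ V → X.card = k →
    (π (X ∩ V₁).card = some true → X ∈ E) ∧
    (π (X ∩ V₁).card = some false → X ∉ E)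

/-- if (0,π₀,…,π_k) = (π_k,…,π₀,0), then G has a π-partition iff the
(k+1)-uniform hypergraph G' on V ∪ {u} with edges {e ∪ {u} : e ∈ E} has a
(0,π₀,…,π_k)-partition. -/
theorem stmt_9 {α : Type} [DecidableEq α] (k : ℕ) (π : ℕ → Option Bool)
    (hfree : ∀ i, π i ≠ some true)
    (hpal : ∀ i ≤ k + 1,
      (if i = 0 then some false else π (i - 1)) =
        (if k + 1 - i = 0 then some false else π (k + 1 - i - 1)))
    (V : Finset α) (E : Set (Finset α)) (hE : ∀ e ∈ E, e ⊆ V ∧ e.card = k)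
    (u : α) (hu : u ∉ V) :
    (∃ V₁ V₂, IsPiPartition k π V E V₁ V₂) ↔
    (∃ V₁ V₂, IsPiPartition (k + 1)
      (fun i => if i = 0 then some false else π (i - 1))
      (insert u V) {X : Finset α | ∃ e ∈ E, X = insert u e} V₁ V₂) := by
  
  have hfree' : ∀ i, (if i = 0 then some false else π (i - 1)) ≠ some true := by
    intro i
    by_cases h : i = 0 <;> simp [h, hfree]
  constructor
  · rintro ⟨V₁, V₂, h1, h2, h3⟩
    have hV₁ : V₁ ⊆ V := h1 ▸ Finset.subset_union_left
    have hV₂ : V₂ ⊆ V := h1 ▸ Finset.subset_union_right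
    refine ⟨insert u V₁, V₂, ?_, ?_, ?_⟩
    · rw [Finset.insert_union, h1]
    · rw [Finset.disjoint_insert_left]
      exact ⟨fun h => hu (hV₂ h), h2⟩
    · intro X hX hcard
      constructor
      · intro habs; exact absurd habs (hfree' _)
      · intro hfalse hmem
        obtain ⟨e, he, rfl⟩ := hmem
        have heV := (hE e he).1
        have hec := (hE e he).2
        have hu_e : u ∉ e ∩ V₁ := fun h => hu (heV (Finset.mem_inter.1 h).1)
        have hi : (insert u e) ∩ insert u V₁ = insert u (e ∩ V₁) := by
          ext x; simp only [Finset.mem_inter, Finset.mem_insert]; tauto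
        rw [hi, Finset.card_insert_of_notMem hu_e] at hfalse
        simp only [Nat.add_sub_cancel, Nat.succ_ne_zero, if_false] at hfalse
        exact (h3 e heV hec).2 hfalse he
  · rintro ⟨W₁, W₂, h1, h2, h3⟩
    have huW : u ∈ W₁ ∪ W₂ := h1 ▸ Finset.mem_insert_self u V
    have hunion : (W₁ ∪ W₂).erase u = V := by
      rw [h1, Finset.erase_insert hu]
    by_cases hcase : u ∈ W₁
    · have huW₂ : u ∉ W₂ := Finset.disjoint_left.1 h2 hcase
      refine ⟨W₁.erase u, W₂, ?_, ?_, ?_⟩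
      · rw [← hunion, Finset.erase_union_distrib, Finset.erase_eq_of_notMem huW₂]
      · exact Finset.disjoint_of_subset_left (Finset.erase_subset _ _) h2
      · intro X hX hcard
        have huX : u ∉ X := fun h => hu (hX h)
        have hXW : X ∩ W₁.erase u = X ∩ W₁ := by
          ext x
          simp only [Finset.mem_inter, Finset.mem_erase]
          exact ⟨fun h => ⟨h.1, h.2.2⟩, fun h => ⟨h.1, fun he => huX (he ▸ h.1), h.2⟩⟩
        have hX'card : (insert u X).card = k + 1 := by
          rw [Finset.card_insert_of_notMem huX, hcard]
        have hX'sub : insert u X ⊆ insert u V := Finset.insert_subset_insert _ hX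
        have hi : (insert u X) ∩ W₁ = insert u (X ∩ W₁) := by
          ext x; simp only [Finset.mem_inter, Finset.mem_insert]
          constructor
          · rintro ⟨hx | hx, hw⟩
            · exact Or.inl hx
            · exact Or.inr ⟨hx, hw⟩
          · rintro (rfl | ⟨hx, hw⟩)
            · exact ⟨Or.inl rfl, hcase⟩
            · exact ⟨Or.inr hx, hw⟩
        have huXW : u ∉ X ∩ W₁ := fun h => huX (Finset.mem_inter.1 h).1
        have := (h3 (insert u X) hX'sub hX'card).2
        rw [hi, Finset.card_insert_of_notMem huXW] at this
        simp only [Nat.add_sub_cancel, Nat.succ_ne_zero, if_false] at this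
        rw [hXW]
        refine ⟨fun habs => absurd habs (hfree _), ?_⟩
        intro hfalse hXE
        exact this hfalse ⟨X, hXE, rfl⟩
    · have huW₂ : u ∈ W₂ := by
        rcases Finset.mem_union.1 huW with h | h
        · exact absurd h hcase
        · exact h
      refine ⟨W₂.erase u, W₁, ?_, ?_, ?_⟩
      · rw [← hunion, Finset.erase_union_distrib, Finset.erase_eq_of_notMem hcase,
          Finset.union_comm]
      · exact (Finset.disjoint_of_subset_left (Finset.erase_subset _ _) h2.symm)
      · intro X hX hcard
        have huX : u ∉ X := fun h => hu (hX h)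
        have hXW : X ∩ W₂.erase u = X ∩ W₂ := by
          ext x
          simp only [Finset.mem_inter, Finset.mem_erase]
          exact ⟨fun h => ⟨h.1, h.2.2⟩, fun h => ⟨h.1, fun he => huX (he ▸ h.1), h.2⟩⟩
        have hX'card : (insert u X).card = k + 1 := by
          rw [Finset.card_insert_of_notMem huX, hcard]
        have hX'sub : insert u X ⊆ insert u V := Finset.insert_subset_insert _ hX
        have hi : (insert u X) ∩ W₁ = X ∩ W₁ := by
          ext x; simp only [Finset.mem_inter, Finset.mem_insert]
          constructor
          · rintro ⟨rfl | hx, hw⟩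
            · exact absurd hw hcase
            · exact ⟨hx, hw⟩
          · rintro ⟨hx, hw⟩; exact ⟨Or.inr hx, hw⟩
        -- card counting
        have hXsubW : X ⊆ W₁ ∪ W₂ := by
          intro x hx; rw [h1]; exact Finset.mem_insert_of_mem (hX hx)
        have hsum : (X ∩ W₁).card + (X ∩ W₂).card = k := by
          rw [← hcard, ← Finset.card_union_of_disjoint
            (Finset.disjoint_of_subset_left Finset.inter_subset_right
              (Finset.disjoint_of_subset_right Finset.inter_subset_right h2))]
          congr 1
          rw [← Finset.inter_union_distrib_left]
          exact Finset.inter_eq_left.2 hXsubW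
        set j := (X ∩ W₁).card with hj
        have hjk : j ≤ k := by omega
        have hpal' := hpal (k - j + 1) (by omega)
        have harith : k + 1 - (k - j + 1) = j := by omega
        rw [harith] at hpal'
        simp only [Nat.succ_ne_zero, if_false, Nat.add_sub_cancel] at hpal'
        have := (h3 (insert u X) hX'sub hX'card).2
        rw [hi, ← hj] at this
        rw [hXW]
        refine ⟨fun habs => absurd habs (hfree _), ?_⟩
        intro hfalse hXE
        have hcard2 : (X ∩ W₂).card = k - j := by omega
        rw [hcard2, hpal'] at hfalse
        have hjf : (if j = 0 then some false else π (j - 1)) = some false := hfalse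
        exact this hjf ⟨X, hXE, rfl⟩
end

section
/- Let π' = (π'₀, ..., π'_{k'}) ∈ {0,*}^{k'+1} have no two consecutive entries equal to *, and suppose (V'₁, V'₂) is a π'-partition of the k'-uniform hypergraph G' constructed from a k-uniform hypergraph G via the vertex copies u^1, ..., u^{k'} and gadget vertices w_u^1, ..., w_u^{k'−1} with edges {w_u^1, ..., w_u^{k'−1}, u^i} for 1 ≤ i ≤ k'. Then for every vertex u of G, all copies u^1, ..., u^{k'} lie in the same part of (V'₁, V'₂). -/
/-- if π' ∈ {0,*}^{k'+1} has no two consecutive *'s and (V₁,V₂) is a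
π'-partition of a k'-uniform hypergraph containing the gadget edges
{w_u^1,…,w_u^{k'−1}, u^i} (1 ≤ i ≤ k') on distinct vertices, then all the copies
u^1,…,u^{k'} lie in the same part. -/
theorem stmt_11 {α : Type} [DecidableEq α] (k' : ℕ) (hk' : 1 ≤ k')
    (π' : ℕ → Option Bool) (hfree : ∀ i, π' i ≠ some true)
    (hcons : ∀ i, i + 1 ≤ k' → ¬(π' i = none ∧ π' (i + 1) = none))
    (V' : Finset α) (E' : Set (Finset α))
    (w : Fin (k' - 1) → α) (c : Fin k' → α)
    (hw : Function.Injective w) (hc : Function.Injective c)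
    (hwc : ∀ i j, w i ≠ c j)
    (hwV : ∀ i, w i ∈ V') (hcV : ∀ j, c j ∈ V')
    (hedges : ∀ j : Fin k', (Finset.image w Finset.univ ∪ {c j}) ∈ E')
    (V₁ V₂ : Finset α) (hpart : IsPiPartition k' π' V' E' V₁ V₂) :
    ∀ i j : Fin k', (c i ∈ V₁ ↔ c j ∈ V₁) := by
  obtain ⟨hunion, hdisj, hmain⟩ := hpart
  set W : Finset α := Finset.image w Finset.univ with hW
  have hWcard : W.card = k' - 1 := by
    rw [hW, Finset.card_image_of_injective _ hw, Finset.card_univ, Fintype.card_fin]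
  have hcW : ∀ j : Fin k', c j ∉ W := by
    intro j hj
    simp only [hW, Finset.mem_image] at hj
    obtain ⟨i, _, hi⟩ := hj
    exact hwc i j hi
  have hXcard : ∀ j : Fin k', (W ∪ {c j}).card = k' := by
    intro j
    rw [Finset.union_comm, ← Finset.insert_eq, Finset.card_insert_of_notMem (hcW j),
      hWcard]
    omega
  have hXsub : ∀ j : Fin k', (W ∪ {c j}) ⊆ V' := by
    intro j x hx
    rcases Finset.mem_union.1 hx with h | h
    · obtain ⟨i, _, hi⟩ := Finset.mem_image.1 h
      exact hi ▸ hwV i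
    · exact (Finset.mem_singleton.1 h) ▸ hcV j
  have hnone : ∀ j : Fin k', π' ((W ∪ {c j}) ∩ V₁).card = none := by
    intro j
    have := (hmain _ (hXsub j) (hXcard j)).2
    cases h : π' ((W ∪ {c j}) ∩ V₁).card with
    | none => rfl
    | some b =>
      cases b with
      | false => exact absurd (hedges j) (this h)
      | true => exact absurd h (hfree _)
  have hcardIn : ∀ j : Fin k', c j ∈ V₁ → ((W ∪ {c j}) ∩ V₁).card = (W ∩ V₁).card + 1 := by
    intro j hj
    rw [Finset.union_inter_distrib_right]
    have : ({c j} : Finset α) ∩ V₁ = {c j} := by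
      rw [Finset.inter_eq_left, Finset.singleton_subset_iff]; exact hj
    rw [this, Finset.union_comm, ← Finset.insert_eq,
      Finset.card_insert_of_notMem (fun h => hcW j (Finset.mem_inter.1 h).1)]
  have hcardOut : ∀ j : Fin k', c j ∉ V₁ → ((W ∪ {c j}) ∩ V₁).card = (W ∩ V₁).card := by
    intro j hj
    rw [Finset.union_inter_distrib_right]
    have : ({c j} : Finset α) ∩ V₁ = ∅ := Finset.singleton_inter_of_notMem hj
    rw [this, Finset.union_empty]
  have key : ∀ i j : Fin k', c i ∈ V₁ → c j ∈ V₁ := by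
    intro i j hi
    by_contra hj
    have h1 := hnone i
    have h2 := hnone j
    rw [hcardIn i hi] at h1
    rw [hcardOut j hj] at h2
    have hle : (W ∩ V₁).card + 1 ≤ k' := by
      have := Finset.card_le_card (Finset.inter_subset_left (s₁ := W) (s₂ := V₁))
      omega
    exact hcons _ hle ⟨h2, h1⟩
  intro i j
  exact ⟨fun h => key i j h, fun h => key j i h⟩
end

section
/- For a 3-uniform hypergraph G=(V,E) with no isolated vertices, writing E_v = {e ∈ E : v ∈ e} for v ∈ V, there exists V₁ ⊆ V such that every edge meets V₁ in exactly one vertex if and only if there exists C' ⊆ {E_v : v ∈ V} such that every e ∈ E belongs to exactly one member of C'. -/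
/-- combinatorial core of the exact-cover equivalence: for a
3-uniform hypergraph with no isolated vertices, there is a set V₁ of vertices
meeting every edge exactly once iff the family {E_v : v ∈ V} (where E_v is the
set of edges containing v) has a subfamily covering every edge exactly once. -/
theorem stmt_13 {α : Type} [DecidableEq α] (V : Finset α) (E : Set (Finset α))
    (hE : ∀ e ∈ E, e ⊆ V ∧ e.card = 3)
    (hiso : ∀ v ∈ V, ∃ e ∈ E, v ∈ e) :
    (∃ V₁ ⊆ V, ∀ e ∈ E, (e ∩ V₁).card = 1) ↔
    (∃ C' ⊆ {S : Set (Finset α) | ∃ v ∈ V, S = {e ∈ E | v ∈ e}},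
      ∀ e ∈ E, ∃! S, S ∈ C' ∧ e ∈ S) := by
  classical
  constructor
  · rintro ⟨V₁, hV₁, h1⟩
    refine ⟨{S | ∃ v ∈ V₁, S = {e ∈ E | v ∈ e}}, ?_, ?_⟩
    · rintro S ⟨v, hv, rfl⟩
      exact ⟨v, hV₁ hv, rfl⟩
    · intro e he
      obtain ⟨v, hv⟩ := Finset.card_eq_one.mp (h1 e he)
      have hve : v ∈ e ∩ V₁ := hv ▸ Finset.mem_singleton_self v
      rw [Finset.mem_inter] at hve
      refine ⟨{f ∈ E | v ∈ f}, ⟨⟨v, hve.2, rfl⟩, ⟨he, hve.1⟩⟩, ?_⟩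
      rintro S ⟨⟨w, hw, rfl⟩, heS⟩
      have hwe : w ∈ e ∩ V₁ := Finset.mem_inter.mpr ⟨heS.2, hw⟩
      have hwv : w = v := by rw [hv] at hwe; exact Finset.mem_singleton.mp hwe
      rw [hwv]
  · rintro ⟨C', hsub, hcov⟩
    choose f hfV hfS using fun S (hS : S ∈ C') => hsub hS
    refine ⟨V.filter (fun v => ∃ S, ∃ hS : S ∈ C', f S hS = v), Finset.filter_subset _ _, ?_⟩
    intro e he
    obtain ⟨S, ⟨hSC, heS⟩, huniq⟩ := hcov e he
    rw [Finset.card_eq_one]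
    refine ⟨f S hSC, ?_⟩
    ext v
    simp only [Finset.mem_inter, Finset.mem_filter, Finset.mem_singleton]
    constructor
    · rintro ⟨hve, -, S', hS', rfl⟩
      have h1 : e ∈ S' := by rw [hfS S' hS']; exact ⟨he, hve⟩
      have h2 : S' = S := huniq S' ⟨hS', h1⟩
      subst h2; rfl
    · rintro rfl
      have hve : f S hSC ∈ e := by
        have h := heS; rw [hfS S hSC] at h; exact h.2
      exact ⟨hve, ⟨hfV S hSC, S, hSC, rfl⟩⟩
end
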